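/- Let p : ℚ[k₁, g₂, g₃] → ℚ[k₁, g₂] be the ℚ-algebra homomorphism with g₃ ↦ 0 (identity on k₁, g₂), let φ : ℚ[k₁, k₂, g₂, q] → ℚ[k₁, g₂] be the ℚ-algebra homomorphism with k₂ ↦ 2g₂ − k₁² and q ↦ −g₂(k₁² − 4g₂) (identity on k₁, g₂), and let A := ℚ[k₁, g₂, g₃] ×_{ℚ[k₁,g₂]} ℚ[k₁, k₂, g₂, q] be the fiber product along p and φ. Let I ⊆ A be the ideal generated by the element (0, q² + g₂²(2k₂ + k₁²)(k₁² − 4g₂)) (which lies in A since both components map to 0 in ℚ[k₁, g₂]). Then the quotient A/I is isomorphic as a ℚ-algebra to ℚ[K₁, K₂, G₂, G₃, Q]/J, where J is the ideal generated by the three polynomials G₃(K₂ − 2G₂ + K₁²), G₃(Q + G₂(K₁² − 4G₂)), and Q² + G₂²(2K₂ + K₁²)(K₁² − 4G₂), via the map sending K₁ ↦ (k₁, k₁), G₂ ↦ (g₂, g₂), G₃ ↦ (g₃, 0), K₂ ↦ (2g₂ − k₁², k₂), Q ↦ (−g₂(k₁² − 4g₂), q). -/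

import Mathlib

open MvPolynomial

/-- `p : ℚ[k₁, g₂, g₃] → ℚ[k₁, g₂]`, the identity on `k₁, g₂` and `g₃ ↦ 0`
(variables: `k₁ = X 0`, `g₂ = X 1`, `g₃ = X 2` in the source, `k₁ = X 0`, `g₂ = X 1` in
the target). -/
noncomputable def pMap : MvPolynomial (Fin 3) ℚ →ₐ[ℚ] MvPolynomial (Fin 2) ℚ :=
  aeval ![X 0, X 1, 0]

/-- `φ : ℚ[k₁, k₂, g₂, q] → ℚ[k₁, g₂]`, the identity on `k₁, g₂`, with
`k₂ ↦ 2g₂ − k₁²` and `q ↦ −g₂(k₁² − 4g₂)` (variables: `k₁ = X 0`, `k₂ = X 1`,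
`g₂ = X 2`, `q = X 3` in the source). -/
noncomputable def phiMap : MvPolynomial (Fin 4) ℚ →ₐ[ℚ] MvPolynomial (Fin 2) ℚ :=
  aeval ![X 0, 2 * X 1 - X 0 ^ 2, X 1, -(X 1) * (X 0 ^ 2 - 4 * X 1)]

/-- The fiber product `A = ℚ[k₁,g₂,g₃] ×_{ℚ[k₁,g₂]} ℚ[k₁,k₂,g₂,q]` along `p` and `φ`,
as a subalgebra of the product. -/
noncomputable def fibA : Subalgebra ℚ (MvPolynomial (Fin 3) ℚ × MvPolynomial (Fin 4) ℚ) :=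
  AlgHom.equalizer (pMap.comp (AlgHom.fst ℚ _ _)) (phiMap.comp (AlgHom.snd ℚ _ _))

/-- `(0, q² + g₂²(2k₂+k₁²)(k₁²−4g₂))` lies in the fiber product. -/
lemma mem0 : ((0 : MvPolynomial (Fin 3) ℚ),
    (X 3 ^ 2 + X 2 ^ 2 * (2 * X 1 + X 0 ^ 2) * (X 0 ^ 2 - 4 * X 2) :
      MvPolynomial (Fin 4) ℚ)) ∈ fibA := by
  rw [fibA, AlgHom.mem_equalizer, AlgHom.comp_apply, AlgHom.comp_apply, AlgHom.fst_apply,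
    AlgHom.snd_apply]
  rw [map_zero, map_add, map_mul, map_mul, map_sub, map_add, map_mul, map_pow, map_pow, map_pow,
    map_mul, map_ofNat, map_ofNat]
  unfold phiMap
  simp only [aeval_X]
  simp only [Matrix.cons_val]
  ring

/-- `(k₁, k₁)` lies in the fiber product. -/
lemma mem1 : ((X 0 : MvPolynomial (Fin 3) ℚ), (X 0 : MvPolynomial (Fin 4) ℚ)) ∈ fibA := by
  show pMap (X 0) = phiMap (X 0)
  simp [pMap, phiMap, bind₁_X_right, map_ofNat]

/-- `(g₂, g₂)` lies in the fiber product. -/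
lemma mem2 : ((X 1 : MvPolynomial (Fin 3) ℚ), (X 2 : MvPolynomial (Fin 4) ℚ)) ∈ fibA := by
  show pMap (X 1) = phiMap (X 2)
  simp [pMap, phiMap, bind₁_X_right, map_ofNat]

/-- `(g₃, 0)` lies in the fiber product. -/
lemma mem3 : ((X 2 : MvPolynomial (Fin 3) ℚ), (0 : MvPolynomial (Fin 4) ℚ)) ∈ fibA := by
  show pMap (X 2) = phiMap 0
  simp [pMap, phiMap, bind₁_X_right, map_ofNat]

/-- `(2g₂ − k₁², k₂)` lies in the fiber product. -/
lemma mem4 : ((2 * X 1 - X 0 ^ 2 : MvPolynomial (Fin 3) ℚ),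
    (X 1 : MvPolynomial (Fin 4) ℚ)) ∈ fibA := by
  rw [fibA, AlgHom.mem_equalizer, AlgHom.comp_apply, AlgHom.comp_apply, AlgHom.fst_apply,
    AlgHom.snd_apply]
  rw [map_sub, map_mul, map_pow, map_ofNat]
  unfold pMap phiMap
  rw [aeval_X, aeval_X, aeval_X]
  rfl

/-- `(−g₂(k₁² − 4g₂), q)` lies in the fiber product. -/
lemma mem5 : ((-(X 1) * (X 0 ^ 2 - 4 * X 1) : MvPolynomial (Fin 3) ℚ),
    (X 3 : MvPolynomial (Fin 4) ℚ)) ∈ fibA := by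
  rw [fibA, AlgHom.mem_equalizer, AlgHom.comp_apply, AlgHom.comp_apply, AlgHom.fst_apply,
    AlgHom.snd_apply]
  rw [map_mul, map_neg, map_sub, map_mul, map_pow, map_ofNat]
  unfold pMap phiMap
  rw [aeval_X, aeval_X, aeval_X]
  rfl

/-! Sending the variables to the five listed elements gives a surjection
`F = (F₁, F₂) : ℚ[K₁,K₂,G₂,G₃,Q] → A`: for `(a, b) ∈ A`, lift `b` through `F₂` and correct the
first component by `G₃` times a lift of `(a - p a) / g₃`. An element of `ker F` vanishes under
`G₃ ↦ 0`, so it is `G₃ C`; as `F₁ G₃ = g₃` is a nonzerodivisor, `F₁ C = 0`, and `F₁` is a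
substitution whose kernel is generated by `K₂ - 2G₂ + K₁²` and `Q + G₂(K₁² - 4G₂)`. Hence
`ker F = G₃ · (those two)`, and `A / I ≅ ℚ[…] / (ker F + F⁻¹ I) = ℚ[…] / J`. -/

section General

variable {R S : Type*} [CommRing R] [CommRing S]

theorem MvPolynomial.algHom_sub_mem_of_forall_X_sub_mem [Algebra R S] {σ : Type*}
    (f g : MvPolynomial σ R →ₐ[R] S) (K : Ideal S) (h : ∀ i, f (X i) - g (X i) ∈ K)
    (P : MvPolynomial σ R) : f P - g P ∈ K := by
  have hfg : (Ideal.Quotient.mkₐ R K).comp f = (Ideal.Quotient.mkₐ R K).comp g :=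
    algHom_ext fun i => by simpa [Ideal.Quotient.mkₐ_eq_mk, Ideal.Quotient.eq] using h i
  simpa [Ideal.Quotient.mkₐ_eq_mk, Ideal.Quotient.eq] using DFunLike.congr_fun hfg P

theorem MvPolynomial.ker_eq_of_forall_X_sub_mem [Algebra R S] {σ : Type*}
    (f : MvPolynomial σ R →ₐ[R] S) (s : S →ₐ[R] MvPolynomial σ R)
    (K : Ideal (MvPolynomial σ R)) (hK : K ≤ RingHom.ker f)
    (hs : ∀ i, s (f (X i)) - X i ∈ K) : RingHom.ker f = K := by
  refine le_antisymm (fun P hP => ?_) hK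
  have := algHom_sub_mem_of_forall_X_sub_mem (s.comp f) (AlgHom.id R _) K hs P
  rw [AlgHom.comp_apply, RingHom.mem_ker.1 hP, map_zero, zero_sub] at this
  simpa using this

theorem Ideal.span_singleton_inf_ker_eq_mul [IsDomain S] {F : Type*} [FunLike F R S]
    [RingHomClass F R S] (f : F) {x : R} (hx : f x ≠ 0) :
    Ideal.span {x} ⊓ RingHom.ker f = Ideal.span {x} * RingHom.ker f := by
  refine le_antisymm (fun P ⟨hPx, hPf⟩ => ?_) Ideal.mul_le_inf
  obtain ⟨C, rfl⟩ := Ideal.mem_span_singleton.1 hPx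
  rw [SetLike.mem_coe, RingHom.mem_ker, map_mul, mul_eq_zero, or_iff_right hx] at hPf
  exact Ideal.mul_mem_mul (Ideal.mem_span_singleton_self x) hPf

theorem Ideal.exists_quotient_algEquiv_of_surjective [Algebra R S] {A : Type*} [CommRing A]
    [Algebra R A]
    (F : A →ₐ[R] S) (hF : Function.Surjective F) (K : Ideal A) {J : Ideal A}
    (hJ : J = RingHom.ker F ⊔ K) {I : Ideal S} (hI : I = K.map F) :
    ∃ e : (A ⧸ J) ≃ₐ[R] (S ⧸ I), ∀ a, e (Ideal.Quotient.mk J a) = Ideal.Quotient.mk I (F a) := by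
  subst hI
  have hker : J = RingHom.ker ((Ideal.Quotient.mkₐ R (K.map F)).comp F) := by
    ext a
    rw [hJ, RingHom.mem_ker, AlgHom.comp_apply, Ideal.Quotient.mkₐ_eq_mk,
      Ideal.Quotient.eq_zero_iff_mem, ← Ideal.mem_comap, Ideal.comap_map_of_surjective _ hF,
      sup_comm, ← RingHom.ker_eq_comap_bot]
  exact ⟨(Ideal.quotientEquivAlgOfEq R hker).trans (Ideal.quotientKerAlgEquivOfSurjective
    ((Ideal.Quotient.mkₐ_surjective R _).comp hF)), fun a => rfl⟩

end General

noncomputable def fstMap : MvPolynomial (Fin 5) ℚ →ₐ[ℚ] MvPolynomial (Fin 3) ℚ :=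
  aeval ![X 0, 2 * X 1 - X 0 ^ 2, X 1, X 2, -(X 1) * (X 0 ^ 2 - 4 * X 1)]

noncomputable def sndMap : MvPolynomial (Fin 5) ℚ →ₐ[ℚ] MvPolynomial (Fin 4) ℚ :=
  aeval ![X 0, X 1, X 2, 0, X 3]

noncomputable def fstSection : MvPolynomial (Fin 3) ℚ →ₐ[ℚ] MvPolynomial (Fin 5) ℚ :=
  aeval ![X 0, X 2, X 3]

noncomputable def sndSection : MvPolynomial (Fin 4) ℚ →ₐ[ℚ] MvPolynomial (Fin 5) ℚ :=
  aeval ![X 0, X 1, X 2, X 4]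

noncomputable def pSection : MvPolynomial (Fin 2) ℚ →ₐ[ℚ] MvPolynomial (Fin 3) ℚ :=
  aeval ![X 0, X 1]

theorem pMap_comp_fstMap : pMap.comp fstMap = phiMap.comp sndMap :=
  algHom_ext fun i => by fin_cases i <;> simp [fstMap, sndMap, pMap, phiMap, map_ofNat]

noncomputable def fiberMap : MvPolynomial (Fin 5) ℚ →ₐ[ℚ] fibA :=
  (fstMap.prod sndMap).codRestrict fibA fun P => DFunLike.congr_fun pMap_comp_fstMap P

theorem coe_fiberMap (P : MvPolynomial (Fin 5) ℚ) :
    (fiberMap P : MvPolynomial (Fin 3) ℚ × MvPolynomial (Fin 4) ℚ) = (fstMap P, sndMap P) :=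
  rfl

theorem fstMap_comp_fstSection : fstMap.comp fstSection = AlgHom.id ℚ _ :=
  algHom_ext fun i => by fin_cases i <;> simp [fstMap, fstSection]

theorem sndMap_comp_sndSection : sndMap.comp sndSection = AlgHom.id ℚ _ :=
  algHom_ext fun i => by fin_cases i <;> simp [sndMap, sndSection]

theorem fstMap_comp_sndSection : fstMap.comp sndSection = pSection.comp phiMap :=
  algHom_ext fun i => by fin_cases i <;> simp [fstMap, sndSection, pSection, phiMap, map_ofNat]

theorem ker_sndMap : RingHom.ker sndMap = Ideal.span {X 3} := by
  refine ker_eq_of_forall_X_sub_mem sndMap sndSection _ ?_ fun i => ?_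
  · simp [Ideal.span_le, sndMap]
  · fin_cases i <;> simp [sndMap, sndSection]

theorem ker_fstMap : RingHom.ker fstMap =
    Ideal.span {X 1 - 2 * X 2 + X 0 ^ 2, X 4 + X 2 * (X 0 ^ 2 - 4 * X 2)} := by
  refine ker_eq_of_forall_X_sub_mem fstMap fstSection _ ?_ fun i => ?_
  · simp [Ideal.span_le, Set.insert_subset_iff, fstMap, map_ofNat]
  · fin_cases i <;> simp [fstMap, fstSection, map_ofNat] <;> rw [Ideal.mem_span_pair]
    exacts [⟨-1, 0, by ring⟩, ⟨0, -1, by ring⟩]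

theorem ker_fiberMap : RingHom.ker fiberMap =
    Ideal.span {X 3 * (X 1 - 2 * X 2 + X 0 ^ 2), X 3 * (X 4 + X 2 * (X 0 ^ 2 - 4 * X 2))} := by
  have hprod : RingHom.ker fiberMap = RingHom.ker sndMap ⊓ RingHom.ker fstMap := by
    ext P
    simp only [RingHom.mem_ker, Ideal.mem_inf, Subtype.ext_iff, coe_fiberMap,
      ZeroMemClass.coe_zero, Prod.mk_eq_zero, and_comm]
  rw [hprod, ker_sndMap, Ideal.span_singleton_inf_ker_eq_mul, ker_fstMap, Ideal.span_mul_span']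
  · simp only [Set.singleton_mul, Set.image_insert_eq, Set.image_singleton]
  · simp [fstMap]

theorem fiberMap_surjective : Function.Surjective fiberMap := by
  rintro ⟨⟨a, b⟩, hab⟩
  have hab' : pMap a = phiMap b := hab
  obtain ⟨c, hc⟩ : X 2 ∣ a - pSection (pMap a) := by
    refine Ideal.mem_span_singleton.1
      (algHom_sub_mem_of_forall_X_sub_mem (AlgHom.id ℚ _) (pSection.comp pMap) _ (fun i => ?_) a)
    fin_cases i <;> simp [pSection, pMap]
  refine ⟨sndSection b + X 3 * fstSection c, Subtype.ext ?_⟩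
  rw [coe_fiberMap, Prod.mk.injEq, map_add, map_add, map_mul, map_mul, ← AlgHom.comp_apply,
    fstMap_comp_sndSection, ← AlgHom.comp_apply fstMap, fstMap_comp_fstSection,
    ← AlgHom.comp_apply sndMap, sndMap_comp_sndSection]
  refine ⟨?_, by simp [sndMap]⟩
  calc pSection (phiMap b) + fstMap (X 3) * c = pSection (pMap a) + X 2 * c := by
        simp [hab', fstMap]
    _ = a := by rw [← hc]; ring

theorem fiberMap_relation :
    fiberMap (X 4 ^ 2 + X 2 ^ 2 * (2 * X 1 + X 0 ^ 2) * (X 0 ^ 2 - 4 * X 2)) =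
      ⟨(0, X 3 ^ 2 + X 2 ^ 2 * (2 * X 1 + X 0 ^ 2) * (X 0 ^ 2 - 4 * X 2)), mem0⟩ := by
  refine Subtype.ext ?_
  rw [coe_fiberMap, Prod.mk.injEq]
  constructor
  · simp [fstMap, map_ofNat]
    ring
  · simp [sndMap, map_ofNat]

/-- Let `I ⊆ A` be the ideal generated by `(0, q² + g₂²(2k₂+k₁²)(k₁²−4g₂))` and `J` the
ideal of `ℚ[K₁,K₂,G₂,G₃,Q]` generated by `G₃(K₂ − 2G₂ + K₁²)`, `G₃(Q + G₂(K₁² − 4G₂))`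
and `Q² + G₂²(2K₂ + K₁²)(K₁² − 4G₂)` (variables `K₁ = X 0, K₂ = X 1, G₂ = X 2,
G₃ = X 3, Q = X 4`).  Then `A/I ≅ ℚ[K₁,K₂,G₂,G₃,Q]/J` as `ℚ`-algebras, via
`K₁ ↦ (k₁,k₁)`, `K₂ ↦ (2g₂−k₁², k₂)`, `G₂ ↦ (g₂,g₂)`, `G₃ ↦ (g₃,0)`,
`Q ↦ (−g₂(k₁²−4g₂), q)`. -/
theorem quotient_of_fiber_product
    (I : Ideal fibA)
    (hI : I = Ideal.span
      {(⟨(0, X 3 ^ 2 + X 2 ^ 2 * (2 * X 1 + X 0 ^ 2) * (X 0 ^ 2 - 4 * X 2)), mem0⟩ :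
        fibA)})
    (J : Ideal (MvPolynomial (Fin 5) ℚ))
    (hJ : J = Ideal.span
      {X 3 * (X 1 - 2 * X 2 + X 0 ^ 2),
       X 3 * (X 4 + X 2 * (X 0 ^ 2 - 4 * X 2)),
       X 4 ^ 2 + X 2 ^ 2 * (2 * X 1 + X 0 ^ 2) * (X 0 ^ 2 - 4 * X 2)}) :
    ∃ e : (MvPolynomial (Fin 5) ℚ ⧸ J) ≃ₐ[ℚ] (fibA ⧸ I),
      e (Ideal.Quotient.mk J (X 0)) = Ideal.Quotient.mk I ⟨(X 0, X 0), mem1⟩ ∧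
      e (Ideal.Quotient.mk J (X 1)) =
        Ideal.Quotient.mk I ⟨(2 * X 1 - X 0 ^ 2, X 1), mem4⟩ ∧
      e (Ideal.Quotient.mk J (X 2)) = Ideal.Quotient.mk I ⟨(X 1, X 2), mem2⟩ ∧
      e (Ideal.Quotient.mk J (X 3)) = Ideal.Quotient.mk I ⟨(X 2, 0), mem3⟩ ∧
      e (Ideal.Quotient.mk J (X 4)) =
        Ideal.Quotient.mk I ⟨(-(X 1) * (X 0 ^ 2 - 4 * X 1), X 3), mem5⟩ := by
  obtain ⟨e, he⟩ := Ideal.exists_quotient_algEquiv_of_surjective fiberMap fiberMap_surjective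
    (Ideal.span {X 4 ^ 2 + X 2 ^ 2 * (2 * X 1 + X 0 ^ 2) * (X 0 ^ 2 - 4 * X 2)}) (J := J) (I := I)
    (by rw [hJ, ker_fiberMap]; simp only [Ideal.span_insert, sup_assoc])
    (by rw [hI, Ideal.map_span, Set.image_singleton, fiberMap_relation])
  refine ⟨e, ?_, ?_, ?_, ?_, ?_⟩ <;> rw [he] <;> congr 1 <;> refine Subtype.ext ?_ <;>
    simp [coe_fiberMap, fstMap, sndMap]
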